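/- arXiv:1407.5433 — 3 statements merged into one kernel-verified Lean document; each statement's English description precedes it below -/
import Mathlib

section
/- For every prime p and every positive integer α, the q-series (q;q)_∞^{p^α} is congruent to (q^p;q^p)_∞^{p^{α-1}} modulo p^α, i.e. every coefficient of the difference is divisible by p^α. -/
open PowerSeries

/-- Coefficientwise: `(q^j; q^j)_∞`, the Euler product with `q` replaced by `q^j`. -/
noncomputable def eulerSub (j : ℕ) : PowerSeries ℤ :=
  PowerSeries.mk fun n =>
    PowerSeries.coeff (R := ℤ) n (∏ k ∈ Finset.range (n + 1), (1 - PowerSeries.X ^ (j * (k + 1))))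

open scoped Classical in
/-- `ψ(q^j)` where `ψ(q) = Σ_{k≥0} q^{k(k+1)/2}`. -/
noncomputable def psiSub (j : ℕ) : PowerSeries ℤ :=
  PowerSeries.mk fun n => if ∃ k, j * (k * (k + 1) / 2) = n then 1 else 0

/-- `A(q^j)` where `A(q) = (q^2;q^2)_∞ (q^3;q^3)_∞^2 / ((q;q)_∞ (q^6;q^6)_∞)`. -/
noncomputable def ASub (j : ℕ) : PowerSeries ℤ :=
  eulerSub (2 * j) * eulerSub (3 * j) ^ 2 *
    PowerSeries.invOfUnit (eulerSub j * eulerSub (6 * j)) 1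

/-- `ψ(-q)`. -/
noncomputable def psiNeg : PowerSeries ℤ :=
  PowerSeries.mk fun n => (-1) ^ n * PowerSeries.coeff (R := ℤ) n (psiSub 1)

/-- `pod_{-3}(n)`, defined by `Σ pod_{-3}(n) q^n = 1/ψ(-q)^3`. -/
noncomputable def pod3 (n : ℕ) : ℤ :=
  PowerSeries.coeff (R := ℤ) n (PowerSeries.invOfUnit (psiNeg ^ 3) 1)

/-- `pod(n) = pod_{-1}(n)`, defined by `Σ pod(n) q^n = 1/ψ(-q)`. -/
noncomputable def pod1 (n : ℕ) : ℤ :=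
  PowerSeries.coeff (R := ℤ) n (PowerSeries.invOfUnit psiNeg 1)

/-- `t_k(n)`: number of ordered `k`-tuples of triangular numbers summing to `n`. -/
noncomputable def triRep (k n : ℕ) : ℕ :=
  Set.ncard {v : Fin k → ℕ | (∀ i, ∃ m, m * (m + 1) / 2 = v i) ∧ ∑ i, v i = n}

/-- `r_k(n)`: number of representations of `n` as an ordered sum of `k` squares. -/
noncomputable def sqRep (k n : ℕ) : ℕ :=
  Set.ncard {x : Fin k → ℤ | ∑ i, (x i) ^ 2 = (n : ℤ)}

/-!
Since `(1 - x)^p ≡ 1 - x^p (mod p)`, the Euler product satisfies `(q;q)^p ≡ (q^p;q^p) (mod p)`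
factor by factor, and `a ≡ b (mod p)` lifts to `a^{p^k} ≡ b^{p^k} (mod p^{k+1})`. To compare
coefficients of degree `n` it suffices to work with the finite partial products over `k ≤ n`,
which agree with the infinite products below degree `n + 1`.
-/

open Finset

theorem Finset.dvd_prod_sub_prod {ι R : Type*} [CommRing R] (s : Finset ι) {f g : ι → R} {d : R}
    (h : ∀ i ∈ s, d ∣ f i - g i) : d ∣ ∏ i ∈ s, f i - ∏ i ∈ s, g i := by
  rw [← Ideal.mem_span_singleton, ← Ideal.Quotient.eq, map_prod, map_prod]
  exact prod_congr rfl fun i hi => Ideal.Quotient.eq.mpr (Ideal.mem_span_singleton.mpr (h i hi))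

theorem natCast_dvd_one_sub_pow_sub_one_sub_pow {R : Type*} [CommRing R] {p : ℕ} (hp : p.Prime)
    (x : R) : (p : R) ∣ (1 - x) ^ p - (1 - x ^ p) := by
  rcases hp.eq_two_or_odd' with rfl | hodd
  · exact ⟨x ^ 2 - x, by push_cast; ring⟩
  · obtain ⟨r, hr⟩ := exists_add_pow_prime_eq hp 1 (-x)
    rw [← sub_eq_add_neg, one_pow, hodd.neg_pow] at hr
    exact ⟨-x * r, by rw [hr]; ring⟩

theorem PowerSeries.coeff_eq_of_X_pow_dvd_sub {R : Type*} [CommRing R] {f g : R⟦X⟧} {n : ℕ}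
    (h : X ^ (n + 1) ∣ f - g) : coeff n f = coeff n g := by
  rw [← sub_eq_zero, ← map_sub]
  exact X_pow_dvd_iff.mp h n n.lt_succ_self

theorem PowerSeries.dvd_coeff_of_C_dvd {R : Type*} [CommRing R] {r : R} {f : R⟦X⟧} (h : C r ∣ f)
    (n : ℕ) : r ∣ coeff n f := by
  obtain ⟨g, rfl⟩ := h
  exact ⟨coeff n g, coeff_C_mul n g r⟩

noncomputable def eulerTrunc (R : Type*) [CommRing R] (j N : ℕ) : R⟦X⟧ :=
  ∏ k ∈ range N, (1 - X ^ (j * (k + 1)))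

section eulerTrunc

variable {R : Type*} [CommRing R]

theorem X_pow_dvd_eulerTrunc_sub_eulerTrunc {j M N : ℕ} (hj : 0 < j) (hMN : M ≤ N) :
    X ^ M ∣ eulerTrunc R j N - eulerTrunc R j M := by
  have hIco : X ^ M ∣ ∏ k ∈ Ico M N, (1 - X ^ (j * (k + 1)) : R⟦X⟧) - ∏ k ∈ Ico M N, 1 :=
    dvd_prod_sub_prod _ fun k hk => by
      rw [sub_sub_cancel_left, dvd_neg]
      exact pow_dvd_pow X (by nlinarith [(mem_Ico.mp hk).1])
  rw [prod_const_one] at hIco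
  rw [eulerTrunc, eulerTrunc, ← prod_range_mul_prod_Ico _ hMN, ← mul_sub_one]
  exact hIco.mul_left _

theorem natCast_dvd_eulerTrunc_pow_sub {p : ℕ} (hp : p.Prime) (j N : ℕ) :
    (p : R⟦X⟧) ∣ eulerTrunc R j N ^ p - eulerTrunc R (p * j) N := by
  rw [eulerTrunc, eulerTrunc, ← prod_pow]
  refine dvd_prod_sub_prod _ fun k _ => ?_
  rw [mul_assoc, mul_comm p, pow_mul X (j * (k + 1)) p]
  exact natCast_dvd_one_sub_pow_sub_one_sub_pow hp _

end eulerTrunc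

theorem X_pow_dvd_eulerSub_sub_eulerTrunc {j : ℕ} (hj : 0 < j) (N : ℕ) :
    (X : ℤ⟦X⟧) ^ N ∣ eulerSub j - eulerTrunc ℤ j N := by
  refine X_pow_dvd_iff.mpr fun m hm => ?_
  have htrunc := X_pow_dvd_iff.mp (X_pow_dvd_eulerTrunc_sub_eulerTrunc (R := ℤ) hj hm) m m.lt_succ_self
  rw [map_sub, sub_eq_zero] at htrunc ⊢
  rw [htrunc, eulerSub, coeff_mk, eulerTrunc]

theorem euler_prod_pow_prime_congr (p : ℕ) (hp : p.Prime) (a : ℕ) (ha : 1 ≤ a) (n : ℕ) :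
    Int.ModEq ((p : ℤ) ^ a)
      (PowerSeries.coeff (R := ℤ) n (eulerSub 1 ^ p ^ a))
      (PowerSeries.coeff (R := ℤ) n (eulerSub p ^ p ^ (a - 1))) := by
  set F := eulerTrunc ℤ 1 (n + 1)
  set G := eulerTrunc ℤ p (n + 1)
  have hFG : (p : ℤ⟦X⟧) ^ a ∣ F ^ p ^ a - G ^ p ^ (a - 1) := by
    have := dvd_sub_pow_of_dvd_sub (natCast_dvd_eulerTrunc_pow_sub (R := ℤ) hp 1 (n + 1)) (a - 1)
    rwa [mul_one, ← pow_mul, ← pow_succ', Nat.sub_add_cancel ha] at this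
  have hF : coeff n (eulerSub 1 ^ p ^ a) = coeff n (F ^ p ^ a) := coeff_eq_of_X_pow_dvd_sub <|
    (X_pow_dvd_eulerSub_sub_eulerTrunc one_pos _).trans (sub_dvd_pow_sub_pow _ _ _)
  have hG : coeff n (eulerSub p ^ p ^ (a - 1)) = coeff n (G ^ p ^ (a - 1)) :=
    coeff_eq_of_X_pow_dvd_sub <|
      (X_pow_dvd_eulerSub_sub_eulerTrunc hp.pos _).trans (sub_dvd_pow_sub_pow _ _ _)
  rw [hF, hG]
  refine (Int.modEq_iff_dvd.mpr ?_).symm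
  rw [← map_sub]
  exact dvd_coeff_of_C_dvd (by rwa [map_pow, map_natCast]) n
end

section
/- The theta function ψ satisfies the 3-dissection ψ(q) = A(q^3) + q ψ(q^9), where A(q) = (q^2;q^2)_∞ (q^3;q^3)_∞^2 / ((q;q)_∞ (q^6;q^6)_∞). -/
open PowerSeries

/-!
Since `T_{3u+1} = 1 + 9 T_u`, the series `ψ(q) - q ψ(q⁹)` collects the triangular numbers `T_k`
with `k ≢ 1 (mod 3)`; writing `k = -3m` or `k = 3m - 1` gives `T_k = 3 T_m + 6 T_{m-1}`, so this
series is Ramanujan's theta function `f(q³, q⁶) = Σ_{m ∈ ℤ} q^{3 T_m + 6 T_{m-1}}`. The Jacobi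
triple product `f(a, b) = (-a; ab)_∞ (-b; ab)_∞ (ab; ab)_∞` turns it into
`(-q³; q⁹)_∞ (-q⁶; q⁹)_∞ (q⁹; q⁹)_∞`, and `(-x; x³)(-x²; x³)(-x³; x³) = (-x; x) = (x²; x²) / (x; x)`
rewrites this as `A(q³)`.

The triple product is proved from its finite form, in which Gaussian binomials `[i + j choose i]_q`
take the place of `1 / (q; q)_∞`, by comparing coefficients below `X ^ n`: there, only terms whose
Gaussian binomial has `i, j ≥ n` survive, and for those `(q; q)_∞ · [i + j choose i]_q ≡ 1`.
-/

open Finset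

def tri (m : ℤ) : ℕ := (m * (m + 1) / 2).toNat

theorem two_mul_tri (m : ℤ) : 2 * (tri m : ℤ) = m * (m + 1) := by
  have hnonneg : 0 ≤ m * (m + 1) := by nlinarith [sq_nonneg (2 * m + 1)]
  have heven : 2 ∣ m * (m + 1) := (Int.even_mul_succ_self m).two_dvd
  unfold tri
  omega

theorem tri_natCast (k : ℕ) : tri k = k * (k + 1) / 2 := by
  have h := two_mul_tri k
  have heven : 2 ∣ k * (k + 1) := (Nat.even_mul_succ_self k).two_dvd
  zify [heven] at h ⊢
  omega

theorem tri_sub_one_add (m : ℤ) : (tri (m - 1) : ℤ) + m = tri m := by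
  linarith [two_mul_tri m, two_mul_tri (m - 1)]

theorem natAbs_le_tri_add_tri_sub_one (m : ℤ) : m.natAbs ≤ tri m + tri (m - 1) := by
  have h1 := two_mul_tri m
  have h2 := two_mul_tri (m - 1)
  zify
  rcases abs_cases m with ⟨h, _⟩ | ⟨h, _⟩ <;> rw [h] <;> nlinarith

section QSeries

variable {R : Type*} [CommRing R]

/-- The summand of Ramanujan's theta function `f(a, b) = Σ_{m ∈ ℤ} a^{m(m+1)/2} b^{m(m-1)/2}`. -/
def thetaTerm (a b : R) (m : ℤ) : R := a ^ tri m * b ^ tri (m - 1)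

theorem mul_pow_mul_thetaTerm (a b : R) (m : ℤ) {i r : ℕ} (h : (r : ℤ) = i + m) :
    a * (a * b) ^ r * thetaTerm a b m = (a * b) ^ i * thetaTerm a b (m + 1) := by
  have ha : 1 + r + tri m = i + tri (m + 1) := by
    zify; linarith [two_mul_tri m, two_mul_tri (m + 1)]
  have hb : r + tri (m - 1) = i + tri m := by
    zify; linarith [two_mul_tri m, two_mul_tri (m - 1)]
  calc a * (a * b) ^ r * thetaTerm a b m = a ^ (1 + r + tri m) * b ^ (r + tri (m - 1)) := by
        rw [thetaTerm]; ring
    _ = a ^ (i + tri (m + 1)) * b ^ (i + tri m) := by rw [ha, hb]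
    _ = (a * b) ^ i * thetaTerm a b (m + 1) := by rw [thetaTerm, add_sub_cancel_right]; ring

theorem thetaTerm_neg_natCast (a b : R) (i : ℕ) :
    thetaTerm a b (-i) = (a * b) ^ tri (i - 1) * b ^ i := by
  have ha : tri (-i) = tri (i - 1) := by
    zify; linarith [two_mul_tri (-i), two_mul_tri (i - 1)]
  have hb : tri (-i - 1) = tri (i - 1) + i := by
    zify; linarith [two_mul_tri (-i - 1), two_mul_tri (i - 1)]
  rw [thetaTerm, ha, hb]
  ring

/-- `qBinom q i j` is the Gaussian binomial coefficient `[i + j choose i]_q`. -/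
def qBinom (q : R) : ℕ → ℕ → R
  | 0, _ => 1
  | _ + 1, 0 => 1
  | i + 1, j + 1 => qBinom q i (j + 1) + q ^ (i + 1) * qBinom q (i + 1) j

@[simp]
theorem qBinom_zero_right (q : R) (i : ℕ) : qBinom q i 0 = 1 := by
  cases i <;> simp [qBinom]

/-- The `q`-Pochhammer symbol `(a; q)_n`. -/
def qPochhammer (a q : R) (n : ℕ) : R := ∏ i ∈ range n, (1 - a * q ^ i)

theorem qPochhammer_succ (a q : R) (n : ℕ) :
    qPochhammer a q (n + 1) = qPochhammer a q n * (1 - a * q ^ n) :=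
  prod_range_succ _ _

theorem qPochhammer_sq (x : R) (n : ℕ) :
    qPochhammer (x ^ 2) (x ^ 2) n = qPochhammer x x n * qPochhammer (-x) x n := by
  rw [qPochhammer, qPochhammer, qPochhammer, ← prod_mul_distrib]
  exact prod_congr rfl fun i _ => by ring

theorem qPochhammer_neg_three_mul (x : R) (n : ℕ) :
    qPochhammer (-x) x (3 * n) =
      qPochhammer (-x) (x ^ 3) n * qPochhammer (-x ^ 2) (x ^ 3) n *
        qPochhammer (-x ^ 3) (x ^ 3) n := by
  induction n with
  | zero => simp [qPochhammer]
  | succ n ih =>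
    rw [show 3 * (n + 1) = 3 * n + 1 + 1 + 1 by ring, qPochhammer_succ, qPochhammer_succ,
      qPochhammer_succ, ih, qPochhammer_succ, qPochhammer_succ, qPochhammer_succ]
    ring

theorem sum_antidiagonal_succ_qBinom_mul (q : R) (n : ℕ) (f : ℕ × ℕ → R) :
    ∑ p ∈ antidiagonal (n + 1), qBinom q p.1 p.2 * f p =
      ∑ p ∈ antidiagonal n, qBinom q p.1 p.2 * (f (p.1 + 1, p.2) + q ^ p.1 * f (p.1, p.2 + 1)) := by
  have hsplit : ∀ p ∈ antidiagonal (n + 1), qBinom q p.1 p.2 * f p =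
      (if p.1 = 0 then 0 else qBinom q (p.1 - 1) p.2 * f p) +
        (if p.2 = 0 then 0 else q ^ p.1 * qBinom q p.1 (p.2 - 1) * f p) := by
    rintro ⟨_ | i, _ | j⟩ h
    · simp at h
    · simp [qBinom]
    · simp
    · simp only [qBinom, Nat.add_one_ne_zero, if_false, add_tsub_cancel_right]
      ring
  rw [sum_congr rfl hsplit, sum_add_distrib, Nat.sum_antidiagonal_succ, Nat.sum_antidiagonal_succ']
  simp only [if_true, add_eq_zero, one_ne_zero, and_false, if_false, zero_add,
    add_tsub_cancel_right, ← sum_add_distrib]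
  exact sum_congr rfl fun p _ => by ring

theorem qBinom_mul_qPochhammer_mul_qPochhammer (q : R) :
    ∀ i j, qBinom q i j * qPochhammer q q i * qPochhammer q q j = qPochhammer q q (i + j)
  | 0, j => by simp [qBinom, qPochhammer]
  | i + 1, 0 => by simp [qPochhammer]
  | i + 1, j + 1 => by
    have h1 := qBinom_mul_qPochhammer_mul_qPochhammer q i (j + 1)
    have h2 := qBinom_mul_qPochhammer_mul_qPochhammer q (i + 1) j
    rw [show i + (j + 1) = i + j + 1 by ring, qPochhammer_succ q q j] at h1
    rw [show i + 1 + j = i + j + 1 by ring, qPochhammer_succ q q i] at h2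
    rw [qBinom, show i + 1 + (j + 1) = i + j + 1 + 1 by ring, qPochhammer_succ q q (i + j + 1),
      qPochhammer_succ q q i, qPochhammer_succ q q j]
    linear_combination (1 - q * q ^ i) * h1 + q ^ (i + 1) * (1 - q * q ^ j) * h2

/-- Cauchy's `q`-binomial theorem. -/
theorem qPochhammer_neg_eq_sum_antidiagonal (q z : R) (s : ℕ) :
    qPochhammer (-z) q s =
      ∑ p ∈ antidiagonal s, qBinom q p.1 p.2 * (q ^ tri (p.1 - 1) * z ^ p.1) := by
  induction s generalizing z with
  | zero => simp [qPochhammer, tri]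
  | succ s ih =>
    have hshift : ∏ k ∈ range s, (1 - -z * q ^ (k + 1)) = qPochhammer (-(z * q)) q s :=
      prod_congr rfl fun k _ => by ring
    rw [sum_antidiagonal_succ_qBinom_mul, qPochhammer, prod_range_succ', hshift, ih, sum_mul]
    refine sum_congr rfl fun p _ => ?_
    have htri : tri ((p.1 + 1 : ℕ) - 1) = tri (p.1 - 1) + p.1 := by
      rw [Nat.cast_succ, add_sub_cancel_right]
      zify
      rw [tri_sub_one_add]
    rw [htri]
    ring

/-- The finite Jacobi triple product. -/
theorem qPochhammer_neg_mul_qPochhammer_neg {a b q : R} (hq : a * b = q) (r s : ℕ) :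
    qPochhammer (-a) q r * qPochhammer (-b) q s =
      ∑ p ∈ antidiagonal (r + s), qBinom q p.1 p.2 * thetaTerm a b (r - p.1) := by
  subst hq
  induction r with
  | zero =>
    rw [qPochhammer, range_zero, prod_empty, one_mul, zero_add, qPochhammer_neg_eq_sum_antidiagonal]
    refine sum_congr rfl fun p _ => ?_
    rw [Nat.cast_zero, zero_sub, thetaTerm_neg_natCast]
  | succ r ih =>
    rw [qPochhammer_succ, show r + 1 + s = r + s + 1 by ring, sum_antidiagonal_succ_qBinom_mul,
      mul_right_comm, ih, sum_mul]
    refine sum_congr rfl fun p _ => ?_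
    have e1 : ((r + 1 : ℕ) : ℤ) - ((p.1 + 1 : ℕ) : ℤ) = r - p.1 := by push_cast; ring
    have e2 : ((r + 1 : ℕ) : ℤ) - p.1 = r - p.1 + 1 := by push_cast; ring
    rw [e1, e2, ← mul_pow_mul_thetaTerm a b _ (i := p.1) (r := r) (by ring)]
    ring

end QSeries

section Truncation

variable {R : Type*} [CommRing R]

noncomputable abbrev reduceMod (n : ℕ) : R⟦X⟧ →+* R⟦X⟧ ⧸ Ideal.span {(X : R⟦X⟧) ^ n} :=
  Ideal.Quotient.mk _

theorem reduceMod_eq_reduceMod_iff {n : ℕ} {f g : R⟦X⟧} :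
    reduceMod n f = reduceMod n g ↔ ∀ i < n, coeff i f = coeff i g := by
  simp only [Ideal.Quotient.eq, Ideal.mem_span_singleton, X_pow_dvd_iff, map_sub, sub_eq_zero]

theorem eq_of_forall_reduceMod_eq {f g : R⟦X⟧} (h : ∀ n, reduceMod n f = reduceMod n g) :
    f = g :=
  ext fun i => reduceMod_eq_reduceMod_iff.1 (h (i + 1)) i (Nat.lt_succ_self i)

theorem reduceMod_X_pow_of_le {n e : ℕ} (h : n ≤ e) : reduceMod n (X ^ e : R⟦X⟧) = 0 :=
  Ideal.Quotient.eq_zero_iff_mem.2 (Ideal.mem_span_singleton.2 (pow_dvd_pow _ h))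

theorem reduceMod_qPochhammer_X_pow {n d K K' : ℕ} (hd : 0 < d) (hK : n ≤ K) (hK' : K ≤ K') :
    reduceMod n (qPochhammer (X ^ d) (X ^ d) K' : R⟦X⟧) =
      reduceMod n (qPochhammer (X ^ d) (X ^ d) K) := by
  rw [qPochhammer, qPochhammer, map_prod, map_prod]
  refine (prod_subset (range_subset_range.2 hK') fun k _ hk => ?_).symm
  rw [mem_range, not_lt] at hk
  rw [← pow_succ', ← pow_mul, map_sub, map_one,
    reduceMod_X_pow_of_le ((by omega : n ≤ k + 1).trans (Nat.le_mul_of_pos_left _ hd)), sub_zero]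

theorem thetaTerm_X_pow (α β : ℕ) (m : ℤ) :
    thetaTerm (X ^ α : R⟦X⟧) (X ^ β) m = X ^ (α * tri m + β * tri (m - 1)) := by
  rw [thetaTerm, ← pow_mul, ← pow_mul, ← pow_add]

open scoped Classical in
theorem coeff_sum_range_X_pow_of_strictMono {e : ℕ → ℕ} (he : StrictMono e) {i M : ℕ}
    (hi : i < M) :
    coeff i (∑ k ∈ range M, (X : R⟦X⟧) ^ e k) = if ∃ k, e k = i then 1 else 0 := by
  simp only [map_sum, coeff_X_pow]
  split_ifs with h
  · obtain ⟨k, rfl⟩ := h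
    rw [sum_eq_single k (fun l _ hl => if_neg (he.injective.ne hl).symm)
      (fun hk => absurd (mem_range.2 ((he.id_le k).trans_lt hi)) hk), if_pos rfl]
  · exact sum_eq_zero fun k _ => if_neg fun hk => h ⟨k, hk.symm⟩

end Truncation

theorem reduceMod_eulerSub {n d K : ℕ} (hd : 0 < d) (hK : n ≤ K) :
    reduceMod n (eulerSub d) = reduceMod n (qPochhammer (X ^ d) (X ^ d) K) := by
  refine reduceMod_eq_reduceMod_iff.2 fun i hi => ?_
  rw [reduceMod_eq_reduceMod_iff.1
    (reduceMod_qPochhammer_X_pow hd (n := i + 1) le_rfl (by omega : i + 1 ≤ K)) i (by omega),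
    eulerSub, coeff_mk, qPochhammer]
  exact congrArg _ (prod_congr rfl fun k _ => by ring)

theorem constantCoeff_eulerSub {d : ℕ} (hd : 0 < d) : constantCoeff (eulerSub d) = 1 := by
  rw [← coeff_zero_eq_constantCoeff_apply]
  simp [eulerSub, hd.ne']

theorem isUnit_eulerSub {d : ℕ} (hd : 0 < d) : IsUnit (eulerSub d) := by
  rw [isUnit_iff_constantCoeff, constantCoeff_eulerSub hd]
  exact isUnit_one

theorem reduceMod_eulerSub_mul_qBinom {n d i j : ℕ} (hd : 0 < d) (hi : n ≤ i) (hj : n ≤ j) :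
    reduceMod n (eulerSub d * qBinom (X ^ d) i j) = 1 := by
  have h := congrArg (reduceMod n) (qBinom_mul_qPochhammer_mul_qPochhammer (X ^ d : ℤ⟦X⟧) i j)
  rw [map_mul, map_mul, ← reduceMod_eulerSub hd hi, ← reduceMod_eulerSub hd hj,
    ← reduceMod_eulerSub hd (by omega : n ≤ i + j)] at h
  rw [map_mul, mul_comm]
  exact ((isUnit_eulerSub hd).map (reduceMod n)).mul_left_inj.1 (by rw [h, one_mul])

/-- The Jacobi triple product for `f(X ^ α, X ^ β)`, modulo `X ^ n`. -/
theorem reduceMod_eulerSub_mul_qPochhammer_neg_mul {n α β N : ℕ} (hα : 0 < α) (hβ : 0 < β)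
    (hN : 2 * n ≤ N) :
    reduceMod n (eulerSub (α + β) *
        (qPochhammer (-X ^ α) (X ^ (α + β)) N * qPochhammer (-X ^ β) (X ^ (α + β)) N)) =
      reduceMod n (∑ p ∈ antidiagonal (2 * N), thetaTerm (X ^ α) (X ^ β) (N - p.1)) := by
  rw [qPochhammer_neg_mul_qPochhammer_neg (pow_add _ _ _).symm, ← two_mul, mul_sum, map_sum,
    map_sum]
  refine sum_congr rfl fun p hp => ?_
  rw [HasAntidiagonal.mem_antidiagonal] at hp
  rw [thetaTerm_X_pow, ← mul_assoc, map_mul]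
  by_cases hlarge : n ≤ α * tri (N - p.1) + β * tri (N - p.1 - 1)
  · rw [reduceMod_X_pow_of_le hlarge, mul_zero]
  · have hm := natAbs_le_tri_add_tri_sub_one (N - p.1)
    have := add_le_add (Nat.le_mul_of_pos_left (tri (N - p.1)) hα)
      (Nat.le_mul_of_pos_left (tri (N - p.1 - 1)) hβ)
    rw [reduceMod_eulerSub_mul_qBinom (by omega) (by omega) (by omega), one_mul]

theorem strictMono_mul_mul_add_one_div_two {d : ℕ} (hd : 0 < d) :
    StrictMono fun k : ℕ => d * (k * (k + 1) / 2) := by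
  refine strictMono_nat_of_lt_succ fun k => Nat.mul_lt_mul_of_pos_left ?_ hd
  exact Nat.div_lt_div_of_lt_of_dvd (Nat.even_mul_succ_self (k + 1)).two_dvd (by nlinarith)

theorem reduceMod_psiSub {n d M : ℕ} (hd : 0 < d) (hM : n ≤ M) :
    reduceMod n (psiSub d) = reduceMod n (∑ k ∈ range M, X ^ (d * (k * (k + 1) / 2))) := by
  refine reduceMod_eq_reduceMod_iff.2 fun i hi => ?_
  rw [coeff_sum_range_X_pow_of_strictMono (strictMono_mul_mul_add_one_div_two hd) (by omega),
    psiSub, coeff_mk]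

theorem sum_filter_mod_three_ne_one_X_pow_eq (N : ℕ) :
    ∑ k ∈ (range (3 * N + 1)).filter (fun k => ¬k % 3 = 1), (X : ℤ⟦X⟧) ^ (k * (k + 1) / 2) =
      ∑ p ∈ antidiagonal (2 * N), thetaTerm (X ^ 3) (X ^ 6) (N - p.1) := by
  refine sum_nbij'
    (fun k => if k % 3 = 0 then (N + k / 3, N - k / 3) else (N - (k + 1) / 3, N + (k + 1) / 3))
    (fun p => if N ≤ p.1 then 3 * (p.1 - N) else 3 * (N - p.1) - 1) ?_ ?_ ?_ ?_ ?_
  · intro k hk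
    simp only [mem_filter, mem_range] at hk
    simp only [HasAntidiagonal.mem_antidiagonal]
    split_ifs <;> omega
  · intro p hp
    simp only [HasAntidiagonal.mem_antidiagonal] at hp
    simp only [mem_filter, mem_range]
    split_ifs <;> omega
  · intro k hk
    simp only [mem_filter, mem_range] at hk
    split_ifs <;> omega
  · intro p hp
    simp only [HasAntidiagonal.mem_antidiagonal] at hp
    ext <;> split_ifs <;> simp only <;> omega
  · intro k hk
    simp only [mem_filter, mem_range] at hk
    rw [thetaTerm_X_pow, ← tri_natCast]
    congr 1
    obtain ⟨u, rfl | rfl⟩ : ∃ u, k = 3 * u ∨ k = 3 * u + 2 := ⟨k / 3, by omega⟩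
    · rw [if_pos (by omega), show (N : ℤ) - ↑(N + 3 * u / 3) = -u by push_cast; omega]
      zify
      linarith [two_mul_tri (3 * u : ℤ), two_mul_tri (-u : ℤ), two_mul_tri (-u - 1 : ℤ)]
    · rw [if_neg (by omega), show (N : ℤ) - ↑(N - (3 * u + 2 + 1) / 3) = u + 1 by omega]
      zify
      linarith [two_mul_tri (3 * u + 2 : ℤ), two_mul_tri (u + 1 : ℤ), two_mul_tri (u + 1 - 1 : ℤ)]

theorem sum_filter_mod_three_eq_one_X_pow_eq (N : ℕ) :
    ∑ k ∈ (range (3 * N + 1)).filter (fun k => k % 3 = 1), (X : ℤ⟦X⟧) ^ (k * (k + 1) / 2) =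
      ∑ u ∈ range N, X * X ^ (9 * (u * (u + 1) / 2)) := by
  refine sum_nbij' (fun k => k / 3) (fun u => 3 * u + 1) ?_ ?_ ?_ ?_ ?_
  · intro k hk
    simp only [mem_filter, mem_range] at hk ⊢
    omega
  · intro u hu
    simp only [mem_filter, mem_range] at hu ⊢
    omega
  · intro k hk
    simp only [mem_filter, mem_range] at hk
    omega
  · intro u _
    omega
  · intro k hk
    simp only [mem_filter, mem_range] at hk
    obtain ⟨u, rfl⟩ : ∃ u, k = 3 * u + 1 := ⟨k / 3, by omega⟩
    rw [← pow_succ', ← tri_natCast, ← tri_natCast, show (3 * u + 1) / 3 = u by omega]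
    congr 1
    zify
    linarith [two_mul_tri (3 * u + 1 : ℤ), two_mul_tri (u : ℤ)]

theorem sum_range_X_pow_tri_eq (N : ℕ) :
    ∑ k ∈ range (3 * N + 1), (X : ℤ⟦X⟧) ^ (k * (k + 1) / 2) =
      ∑ p ∈ antidiagonal (2 * N), thetaTerm (X ^ 3) (X ^ 6) (N - p.1) +
        X * ∑ u ∈ range N, X ^ (9 * (u * (u + 1) / 2)) := by
  rw [← sum_filter_not_add_sum_filter _ (fun k => k % 3 = 1), sum_filter_mod_three_ne_one_X_pow_eq,
    sum_filter_mod_three_eq_one_X_pow_eq, mul_sum]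

theorem reduceMod_psiSub_sub_X_mul_psiSub {n N : ℕ} (hN : n ≤ N) :
    reduceMod n (psiSub 1 - X * psiSub 9) =
      reduceMod n (∑ p ∈ antidiagonal (2 * N), thetaTerm (X ^ 3) (X ^ 6) (N - p.1)) := by
  rw [map_sub, map_mul, reduceMod_psiSub one_pos (by omega : n ≤ 3 * N + 1),
    reduceMod_psiSub (by norm_num : 0 < 9) hN, ← map_mul, ← map_sub]
  simp only [one_mul]
  rw [sum_range_X_pow_tri_eq, add_sub_cancel_right]

theorem psiSub_sub_X_mul_psiSub_mul_eulerSub :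
    (psiSub 1 - X * psiSub 9) * (eulerSub 3 * eulerSub 18) = eulerSub 6 * eulerSub 9 ^ 2 := by
  refine eq_of_forall_reduceMod_eq fun n => ?_
  set N := 2 * n
  have hS : reduceMod n (psiSub 1 - X * psiSub 9) = reduceMod n (eulerSub 9) *
      reduceMod n (qPochhammer (-X ^ 3) (X ^ 9) N * qPochhammer (-X ^ 6) (X ^ 9) N) := by
    rw [reduceMod_psiSub_sub_X_mul_psiSub (N := N) (by omega), ← map_mul,
      ← reduceMod_eulerSub_mul_qPochhammer_neg_mul (α := 3) (β := 6) (by norm_num) (by norm_num)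
        le_rfl]
  have h3 : reduceMod n (eulerSub 3) = reduceMod n (qPochhammer (X ^ 3) (X ^ 3) (3 * N)) :=
    reduceMod_eulerSub (by norm_num) (by omega)
  have h6 : reduceMod n (eulerSub 6) = reduceMod n (qPochhammer (X ^ 3) (X ^ 3) (3 * N)) *
      reduceMod n (qPochhammer (-X ^ 3) (X ^ 9) N * qPochhammer (-X ^ 6) (X ^ 9) N) *
      reduceMod n (qPochhammer (-X ^ 9) (X ^ 9) N) := by
    have h := qPochhammer_sq (X ^ 3 : ℤ⟦X⟧) (3 * N)
    rw [qPochhammer_neg_three_mul] at h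
    simp only [← pow_mul, Nat.reduceMul] at h
    rw [reduceMod_eulerSub (K := 3 * N) (by norm_num) (by omega), h]
    simp only [map_mul, mul_assoc]
  have h9 : reduceMod n (eulerSub 9) = reduceMod n (qPochhammer (X ^ 9) (X ^ 9) N) :=
    reduceMod_eulerSub (by norm_num) (by omega)
  have h18 : reduceMod n (eulerSub 18) = reduceMod n (qPochhammer (X ^ 9) (X ^ 9) N) *
      reduceMod n (qPochhammer (-X ^ 9) (X ^ 9) N) := by
    have h := qPochhammer_sq (X ^ 9 : ℤ⟦X⟧) N
    simp only [← pow_mul, Nat.reduceMul] at h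
    rw [reduceMod_eulerSub (K := N) (by norm_num) (by omega), h, map_mul]
  rw [map_mul, map_mul, map_mul, map_pow, hS, h3, h6, h18, h9]
  ring

theorem psi_three_dissection :
    psiSub 1 = ASub 3 + PowerSeries.X * psiSub 9 := by
  have hconst : constantCoeff (eulerSub 3 * eulerSub 18) = ((1 : ℤˣ) : ℤ) := by
    rw [map_mul, constantCoeff_eulerSub (by norm_num), constantCoeff_eulerSub (by norm_num)]
    rfl
  have hA : ASub 3 = psiSub 1 - X * psiSub 9 := by
    rw [ASub, ← psiSub_sub_X_mul_psiSub_mul_eulerSub, mul_assoc, mul_invOfUnit _ _ hconst, mul_one]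
  rw [hA, sub_add_cancel]
end

section
/- With A(q) = (q^2;q^2)_∞ (q^3;q^3)_∞^2 / ((q;q)_∞ (q^6;q^6)_∞) and ψ(q) = Σ_{n≥0} q^{n(n+1)/2}, one has A(q^3)^3 + q^3 ψ(q^9)^3 = ψ(q^3)^4 / ψ(q^9). -/
open PowerSeries

/-! Jacobi's triple product, proved from its finite form with Gaussian binomial coefficients,
gives `A(q^3) = f(q^3, q^6)` and Gauss's identity `ψ(q) (q; q)_∞ = (q^2; q^2)_∞^2`. Let `ω` be a
primitive cube root of unity. The 3-dissection `ψ(q) = f(q^3, q^6) + q ψ(q^9)` gives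
`ψ(q) ψ(ωq) ψ(ω²q) = f(q^3, q^6)^3 + q^3 ψ(q^9)^3`, and grouping the factors of
`(q; q)_∞ (ωq; ωq)_∞ (ω²q; ω²q)_∞` by the residue of the exponent mod 3 gives
`(q^3; q^3)_∞^4 / (q^9; q^9)_∞`. So multiplying Gauss's identity over `q ↦ ωᵏq`, and using it
again at `q^3` and `q^9`, turns `A(q^3)^3 + q^3 ψ(q^9)^3` into `ψ(q^3)^4 / ψ(q^9)`.

Infinite products are handled modulo `X ^ n`, where they agree with their partial products. -/

open Finset

noncomputable section

theorem Finset.prod_range_mul_eq_prod_prod_range {M : Type*} [CommMonoid M] (f : ℕ → M)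
    (k m : ℕ) : ∏ i ∈ range (m * k), f i = ∏ i ∈ range m, ∏ r ∈ range k, f (k * i + r) := by
  induction m with
  | zero => simp
  | succ m ih => rw [add_mul, one_mul, prod_range_add, ih, prod_range_succ, mul_comm k m]

namespace PowerSeries

variable {R S : Type*} [CommRing R] [CommRing S]

abbrev modX (n : ℕ) : R⟦X⟧ →+* R⟦X⟧ ⧸ Ideal.span {(X : R⟦X⟧) ^ n} := Ideal.Quotient.mk _

theorem modX_eq_modX_iff {n : ℕ} {f g : R⟦X⟧} : modX n f = modX n g ↔ X ^ n ∣ f - g := by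
  rw [Ideal.Quotient.eq, Ideal.mem_span_singleton]

theorem modX_eq_one_of_dvd {n : ℕ} {f : R⟦X⟧} (h : X ^ n ∣ f - 1) : modX n f = 1 := by
  rwa [← map_one (modX n), modX_eq_modX_iff]

theorem eq_of_forall_modX_eq {f g : R⟦X⟧} (h : ∀ n, modX n f = modX n g) : f = g := by
  ext n
  rw [← sub_eq_zero, ← map_sub]
  exact X_pow_dvd_iff.mp (modX_eq_modX_iff.mp (h (n + 1))) n n.lt_succ_self

/-- The infinite product `∏ₖ g k`: the limit of the partial products when
`ConvergentFactors g`. -/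
def infProd (g : ℕ → R⟦X⟧) : R⟦X⟧ :=
  mk fun n => coeff n (∏ k ∈ range (n + 1), g k)

def ConvergentFactors (g : ℕ → R⟦X⟧) : Prop :=
  ∀ k, X ^ (k + 1) ∣ g k - 1

namespace ConvergentFactors

variable {g h : ℕ → R⟦X⟧}

theorem one_sub_X_pow {e : ℕ → ℕ} (he : ∀ k, k < e k) :
    ConvergentFactors fun k => (1 - X ^ e k : R⟦X⟧) := fun k => by
  rw [sub_sub_cancel_left]
  exact (pow_dvd_pow X (he k)).neg_right

theorem one_add_X_pow {e : ℕ → ℕ} (he : ∀ k, k < e k) :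
    ConvergentFactors fun k => (1 + X ^ e k : R⟦X⟧) := fun k => by
  rw [add_sub_cancel_left]
  exact pow_dvd_pow X (he k)

theorem mul (hg : ConvergentFactors g) (hh : ConvergentFactors h) :
    ConvergentFactors fun k => g k * h k := fun k => by
  rw [show g k * h k - 1 = (g k - 1) * h k + (h k - 1) by ring]
  exact dvd_add (dvd_mul_of_dvd_left (hg k) _) (hh k)

theorem rescale (hg : ConvergentFactors g) (a : R) :
    ConvergentFactors fun k => rescale a (g k) := fun k => by
  obtain ⟨c, hc⟩ := hg k
  refine ⟨C (a ^ (k + 1)) * PowerSeries.rescale a c, ?_⟩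
  rw [← map_one (PowerSeries.rescale a), ← map_sub, hc, map_mul, map_pow, rescale_X, mul_pow,
    ← map_pow]
  ring

theorem modX_prod_range_of_le (hg : ConvergentFactors g) {n m : ℕ} (hm : n ≤ m) :
    modX n (∏ k ∈ range m, g k) = modX n (∏ k ∈ range n, g k) := by
  have hone : ∀ k ∈ Ico n m, modX n (g k) = 1 := fun k hk =>
    modX_eq_one_of_dvd ((pow_dvd_pow X (by simp at hk; omega)).trans (hg k))
  rw [← prod_range_mul_prod_Ico g hm, map_mul, map_prod (modX n) _ (Ico n m),
    prod_eq_one hone, mul_one]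

theorem modX_prod_range (hg : ConvergentFactors g) {n m m' : ℕ} (hm : n ≤ m) (hm' : n ≤ m') :
    modX n (∏ k ∈ range m, g k) = modX n (∏ k ∈ range m', g k) :=
  (hg.modX_prod_range_of_le hm).trans (hg.modX_prod_range_of_le hm').symm

theorem modX_infProd (hg : ConvergentFactors g) {n m : ℕ} (hm : n ≤ m) :
    modX n (infProd g) = modX n (∏ k ∈ range m, g k) := by
  rw [modX_eq_modX_iff, X_pow_dvd_iff]
  intro i hi
  have hstable := modX_eq_modX_iff.mp (hg.modX_prod_range_of_le (by omega : i + 1 ≤ m)).symm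
  rw [map_sub, infProd, coeff_mk, ← map_sub, X_pow_dvd_iff.mp hstable i i.lt_succ_self]

theorem constantCoeff_infProd (hg : ConvergentFactors g) : constantCoeff (infProd g) = 1 := by
  have h0 := X_dvd_iff.mp (by simpa using hg 0)
  rw [map_sub, map_one, sub_eq_zero] at h0
  rw [← coeff_zero_eq_constantCoeff_apply, infProd, coeff_mk, zero_add, prod_range_one,
    coeff_zero_eq_constantCoeff_apply, h0]

theorem infProd_mul (hg : ConvergentFactors g) (hh : ConvergentFactors h) :
    infProd g * infProd h = infProd fun k => g k * h k := by
  refine eq_of_forall_modX_eq fun n => ?_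
  rw [map_mul, hg.modX_infProd le_rfl, hh.modX_infProd le_rfl, (hg.mul hh).modX_infProd le_rfl,
    ← map_mul, prod_mul_distrib]

end ConvergentFactors

theorem map_infProd (φ : R →+* S) (g : ℕ → R⟦X⟧) :
    map φ (infProd g) = infProd fun k => map φ (g k) := by
  ext n
  simp only [infProd, coeff_map, coeff_mk, ← map_prod]

theorem rescale_infProd (a : R) (g : ℕ → R⟦X⟧) :
    rescale a (infProd g) = infProd fun k => rescale a (g k) := by
  ext n
  simp only [infProd, coeff_rescale, coeff_mk, ← map_prod]

theorem convergentFactors_euler {j : ℕ} (hj : 0 < j) :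
    ConvergentFactors fun k => (1 - X ^ (j * (k + 1)) : R⟦X⟧) :=
  .one_sub_X_pow fun k => by nlinarith

/-- `(-q^c; q^m)_∞ = ∏ₖ (1 + q^(c + m k))`. -/
def pochNeg (c m : ℕ) : R⟦X⟧ := infProd fun k => 1 + X ^ (c + m * k)

theorem convergentFactors_pochNeg {c m : ℕ} (hc : 0 < c) (hm : 0 < m) :
    ConvergentFactors fun k => (1 + X ^ (c + m * k) : R⟦X⟧) :=
  .one_add_X_pow fun k => by nlinarith

theorem prod_pochNeg_residues {c m k : ℕ} (hc : 0 < c) (hm : 0 < m) (hk : 0 < k) :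
    ∏ r ∈ range k, (pochNeg (c + m * r) (k * m) : R⟦X⟧) = pochNeg c m := by
  refine eq_of_forall_modX_eq fun n => ?_
  unfold pochNeg
  rw [map_prod, prod_congr rfl fun r _ =>
      (convergentFactors_pochNeg (by omega) (by positivity)).modX_infProd le_rfl,
    ← map_prod, (convergentFactors_pochNeg hc hm).modX_infProd (Nat.le_mul_of_pos_right n hk),
    prod_range_mul_eq_prod_prod_range, prod_comm]
  congr 1
  refine prod_congr rfl fun i _ => prod_congr rfl fun r _ => ?_
  ring_nf

theorem pochNeg_mul_pochNeg {c m : ℕ} (hc : 0 < c) (hm : 0 < m) :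
    (pochNeg c (2 * m) * pochNeg (c + m) (2 * m) : R⟦X⟧) = pochNeg c m := by
  simpa [prod_range, Fin.prod_univ_two] using prod_pochNeg_residues (R := R) hc hm two_pos

theorem pochNeg_mul_pochNeg_mul_pochNeg {c m : ℕ} (hc : 0 < c) (hm : 0 < m) :
    (pochNeg c (3 * m) * pochNeg (c + m) (3 * m) * pochNeg (c + 2 * m) (3 * m) : R⟦X⟧) =
      pochNeg c m := by
  simpa [prod_range, Fin.prod_univ_three, mul_comm m 2] using
    prod_pochNeg_residues (R := R) hc hm three_pos

open scoped Classical in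
def indicatorSeries (s : Set ℕ) : R⟦X⟧ := mk fun n => if n ∈ s then 1 else 0

theorem coeff_indicatorSeries_of_notMem {s : Set ℕ} {n : ℕ} (h : n ∉ s) :
    coeff n (indicatorSeries s : R⟦X⟧) = 0 := by
  classical
  simp [indicatorSeries, h]

theorem indicatorSeries_union {s t : Set ℕ} (h : Disjoint s t) :
    (indicatorSeries (s ∪ t) : R⟦X⟧) = indicatorSeries s + indicatorSeries t := by
  classical
  ext n
  by_cases hs : n ∈ s
  · simp [indicatorSeries, hs, Set.disjoint_left.mp h hs]
  · simp [indicatorSeries, hs]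

theorem X_pow_mul_indicatorSeries (c : ℕ) (s : Set ℕ) :
    (X ^ c * indicatorSeries s : R⟦X⟧) = indicatorSeries ((· + c) '' s) := by
  classical
  ext n
  have hmem : n ∈ (· + c) '' s ↔ c ≤ n ∧ n - c ∈ s := by
    constructor
    · rintro ⟨m, hm, rfl⟩
      simpa using hm
    · rintro ⟨hc, hs⟩
      exact ⟨n - c, hs, Nat.sub_add_cancel hc⟩
  simp only [coeff_X_pow_mul', indicatorSeries, coeff_mk, hmem]
  split_ifs <;> simp_all

theorem map_indicatorSeries (φ : R →+* S) (s : Set ℕ) :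
    map φ (indicatorSeries s : R⟦X⟧) = indicatorSeries s := by
  classical
  ext n
  simp only [indicatorSeries, coeff_map, coeff_mk]
  split_ifs <;> simp

theorem rescale_indicatorSeries_of_pow_eq_one {a : R} {k : ℕ} (ha : a ^ k = 1) {s : Set ℕ}
    (hs : ∀ n ∈ s, k ∣ n) : rescale a (indicatorSeries s : R⟦X⟧) = indicatorSeries s := by
  ext n
  rw [coeff_rescale]
  by_cases hn : n ∈ s
  · obtain ⟨q, rfl⟩ := hs n hn
    rw [pow_mul, ha, one_pow, one_mul]
  · rw [coeff_indicatorSeries_of_notMem hn, mul_zero]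

/-- The Gaussian binomial coefficient `[m, r]` in the base `q ^ u`, zero for `r ∉ [0, m]`. -/
def gaussBinom (u : ℕ) : ℕ → ℤ → R⟦X⟧
  | 0, r => if r = 0 then 1 else 0
  | m + 1, r => gaussBinom u m r + X ^ (u * ((m : ℤ) + 1 - r).toNat) * gaussBinom u m (r - 1)

/-- `(q^u; q^u)_s`. -/
def eulerPartial (u s : ℕ) : R⟦X⟧ := ∏ k ∈ range s, (1 - X ^ (u * (k + 1)))

section GaussBinom

variable (u : ℕ)

theorem gaussBinom_succ (m : ℕ) (r : ℤ) :
    (gaussBinom u (m + 1) r : R⟦X⟧) =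
      gaussBinom u m r + X ^ (u * ((m : ℤ) + 1 - r).toNat) * gaussBinom u m (r - 1) := rfl

theorem gaussBinom_of_neg {r : ℤ} (hr : r < 0) : ∀ m, (gaussBinom u m r : R⟦X⟧) = 0
  | 0 => if_neg hr.ne
  | m + 1 => by rw [gaussBinom_succ, gaussBinom_of_neg hr, gaussBinom_of_neg (by omega)]; ring

theorem gaussBinom_of_lt : ∀ {m : ℕ} {r : ℤ}, m < r → (gaussBinom u m r : R⟦X⟧) = 0
  | 0, _, hr => if_neg (by omega)
  | m + 1, r, hr => by
    rw [gaussBinom_succ, gaussBinom_of_lt (by omega), gaussBinom_of_lt (by omega)]; ring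

theorem gaussBinom_zero_right : ∀ m, (gaussBinom u m 0 : R⟦X⟧) = 1
  | 0 => if_pos rfl
  | m + 1 => by rw [gaussBinom_succ, gaussBinom_zero_right, gaussBinom_of_neg u (by omega)]; ring

theorem gaussBinom_self : ∀ m : ℕ, (gaussBinom u m m : R⟦X⟧) = 1
  | 0 => if_pos rfl
  | m + 1 => by
    rw [gaussBinom_succ, gaussBinom_of_lt u (by omega), Nat.cast_succ, add_sub_cancel_right,
      gaussBinom_self]
    simp

theorem eulerPartial_succ (s : ℕ) :
    (eulerPartial u (s + 1) : R⟦X⟧) = eulerPartial u s * (1 - X ^ (u * (s + 1))) :=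
  prod_range_succ _ _

theorem gaussBinom_mul_eulerPartial :
    ∀ {m r : ℕ}, r ≤ m →
      (gaussBinom u m r * eulerPartial u r * eulerPartial u (m - r) : R⟦X⟧) = eulerPartial u m
  | m, 0, _ => by rw [Nat.cast_zero, gaussBinom_zero_right]; simp [eulerPartial]
  | 0, r + 1, h => absurd h (by omega)
  | m + 1, r + 1, h => by
    obtain ⟨d, rfl⟩ | rfl : (∃ d, m = r + 1 + d) ∨ m = r := by
      rcases Nat.lt_or_ge r m with hr | hr
      · exact .inl ⟨m - (r + 1), by omega⟩
      · exact .inr (by omega)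
    · have ih1 := gaussBinom_mul_eulerPartial (m := r + 1 + d) (r := r + 1) (by omega)
      have ih2 := gaussBinom_mul_eulerPartial (m := r + 1 + d) (r := r) (by omega)
      have hX : (X ^ (u * (d + 1)) * X ^ (u * (r + 1)) : R⟦X⟧) = X ^ (u * (r + 1 + d + 1)) := by
        rw [← pow_add]; ring_nf
      rw [show r + 1 + d - (r + 1) = d by omega, show r + 1 + d - r = d + 1 by omega] at *
      rw [show r + 1 + d + 1 - (r + 1) = d + 1 by omega, gaussBinom_succ, Nat.cast_succ,
        add_sub_cancel_right,
        show ((r + 1 + d : ℕ) : ℤ) + 1 - (r + 1) = ((d + 1 : ℕ) : ℤ) by push_cast; ring,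
        Int.toNat_natCast]
      push_cast at ih1
      linear_combination (1 - X ^ (u * (d + 1))) * ih1 +
        X ^ (u * (d + 1)) * (1 - X ^ (u * (r + 1))) * ih2 +
        gaussBinom (R := R) u (r + 1 + d) (r + 1) * eulerPartial u (r + 1) *
          eulerPartial_succ (R := R) u d +
        X ^ (u * (d + 1)) * gaussBinom (R := R) u (r + 1 + d) r * eulerPartial u (d + 1) *
          eulerPartial_succ (R := R) u r -
        eulerPartial_succ (R := R) u (r + 1 + d) - eulerPartial (R := R) u (r + 1 + d) * hX
    · rw [Nat.sub_self, gaussBinom_self]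
      simp [eulerPartial]

variable {u}

theorem isUnit_eulerPartial (hu : 0 < u) (s : ℕ) : IsUnit (eulerPartial u s : R⟦X⟧) := by
  rw [isUnit_iff_constantCoeff, eulerPartial, map_prod]
  simp [hu.ne']

/-- The other `q`-Pascal rule: it follows from the product formula after cancelling the unit
`(q^u; q^u)_r (q^u; q^u)_(m+1-r)`. -/
theorem gaussBinom_succ' (hu : 0 < u) (m : ℕ) (r : ℤ) :
    (gaussBinom u (m + 1) r : R⟦X⟧) =
      X ^ (u * r.toNat) * gaussBinom u m r + gaussBinom u m (r - 1) := by
  rcases lt_trichotomy r 0 with hr | rfl | hr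
  · simp [gaussBinom_of_neg u hr, gaussBinom_of_neg u (by omega : r - 1 < 0)]
  · simp [gaussBinom_zero_right, gaussBinom_of_neg u (show (-1 : ℤ) < 0 by norm_num)]
  obtain ⟨s, rfl⟩ : ∃ s : ℕ, r = s + 1 := ⟨r.toNat - 1, by omega⟩
  rcases lt_trichotomy (s + 1) (m + 1) with hs | hs | hs
  · obtain ⟨d, rfl⟩ : ∃ d, m = s + 1 + d := ⟨m - (s + 1), by omega⟩
    have hunit := (isUnit_eulerPartial (R := R) hu (s + 1)).mul (isUnit_eulerPartial hu (d + 1))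
    refine hunit.mul_left_inj.mp ?_
    have h0 := gaussBinom_mul_eulerPartial (R := R) u (m := s + 1 + d + 1) (r := s + 1) (by omega)
    have h1 := gaussBinom_mul_eulerPartial (R := R) u (m := s + 1 + d) (r := s + 1) (by omega)
    have h2 := gaussBinom_mul_eulerPartial (R := R) u (m := s + 1 + d) (r := s) (by omega)
    rw [show s + 1 + d + 1 - (s + 1) = d + 1 by omega] at h0
    rw [show s + 1 + d - (s + 1) = d by omega] at h1
    rw [show s + 1 + d - s = d + 1 by omega] at h2
    have hX : (X ^ (u * (s + 1)) * X ^ (u * (d + 1)) : R⟦X⟧) = X ^ (u * (s + 1 + d + 1)) := by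
      rw [← pow_add]; ring_nf
    push_cast at h0 h1 h2
    rw [show ((s : ℤ) + 1).toNat = s + 1 by omega, add_sub_cancel_right]
    linear_combination h0 - X ^ (u * (s + 1)) * (1 - X ^ (u * (d + 1))) * h1 -
      (1 - X ^ (u * (s + 1))) * h2 -
      X ^ (u * (s + 1)) * gaussBinom (R := R) u (s + 1 + d) (s + 1) * eulerPartial u (s + 1) *
        eulerPartial_succ (R := R) u d -
      gaussBinom (R := R) u (s + 1 + d) s * eulerPartial u (d + 1) *
        eulerPartial_succ (R := R) u s +
      eulerPartial_succ (R := R) u (s + 1 + d) + eulerPartial (R := R) u (s + 1 + d) * hX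
  · obtain rfl : s = m := by omega
    rw [add_sub_cancel_right, gaussBinom_self, gaussBinom_of_lt u (show (s : ℤ) < s + 1 by omega),
      ← Nat.cast_succ, gaussBinom_self]
    ring
  · rw [gaussBinom_of_lt u (by omega), gaussBinom_of_lt u (by omega),
      gaussBinom_of_lt u (by omega)]
    ring

theorem gaussBinom_add_two (hu : 0 < u) (m : ℕ) (r : ℤ) :
    (gaussBinom u (m + 2) (r + 1) : R⟦X⟧) =
      gaussBinom u m r * (1 + X ^ (u * (m + 1))) +
      gaussBinom u m (r - 1) * X ^ (u * ((m : ℤ) + 1 - r).toNat) +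
      gaussBinom u m (r + 1) * X ^ (u * (r + 1).toNat) := by
  have hA := gaussBinom_succ (R := R) u (m + 1) (r + 1)
  rw [show ((m + 1 : ℕ) : ℤ) + 1 - (r + 1) = m + 1 - r by push_cast; ring, add_sub_cancel_right]
    at hA
  have hB := gaussBinom_succ' (R := R) hu m (r + 1)
  rw [add_sub_cancel_right] at hB
  have hC := gaussBinom_succ' (R := R) hu m r
  have hE : (X ^ (u * ((m : ℤ) + 1 - r).toNat) * X ^ (u * r.toNat) * gaussBinom u m r : R⟦X⟧) =
      X ^ (u * (m + 1)) * gaussBinom u m r := by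
    rcases lt_or_ge r 0 with hr | hr
    · simp [gaussBinom_of_neg u hr]
    rcases lt_or_ge (m : ℤ) r with hr' | hr'
    · simp [gaussBinom_of_lt u hr']
    rw [← pow_add, ← mul_add, show ((m : ℤ) + 1 - r).toNat + r.toNat = m + 1 by omega]
  rw [hA, hB, hC]
  linear_combination hE

/-- Modulo `X ^ n`, the central binomials `[2N, N + i]` tend to `1 / (q^u; q^u)_∞`. -/
theorem modX_gaussBinom_mul_eulerPartial (hu : 0 < u) {n N : ℕ} {i : ℤ}
    (hi : i.natAbs + n ≤ N) :
    modX n (gaussBinom u (2 * N) (N + i) * eulerPartial u N : R⟦X⟧) = 1 := by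
  have hP {k : ℕ} (hk : n ≤ k) : modX n (eulerPartial u k : R⟦X⟧) = modX n (eulerPartial u N) :=
    (convergentFactors_euler hu).modX_prod_range hk (by omega)
  obtain ⟨r, hr⟩ : ∃ r : ℕ, (N : ℤ) + i = r := ⟨(N + i).toNat, by omega⟩
  have h := congrArg (modX n)
    (gaussBinom_mul_eulerPartial (R := R) u (m := 2 * N) (r := r) (by omega))
  rw [map_mul, map_mul, hP (k := r) (by omega), hP (k := 2 * N - r) (by omega),
    hP (k := 2 * N) (by omega), ← hr] at h
  refine ((isUnit_eulerPartial (R := R) hu N).map (modX n)).mul_left_injective ?_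
  simp only [map_mul, h, one_mul]

end GaussBinom

end PowerSeries

theorem eulerSub_eq_infProd (j : ℕ) :
    eulerSub j = infProd fun k => 1 - X ^ (j * (k + 1)) := rfl

theorem constantCoeff_eulerSub_s3 {j : ℕ} (hj : 0 < j) : constantCoeff (eulerSub j) = 1 :=
  (convergentFactors_euler hj).constantCoeff_infProd

theorem map_eulerSub {S : Type*} [CommRing S] (φ : ℤ →+* S) (j : ℕ) :
    map φ (eulerSub j) = infProd fun k => 1 - X ^ (j * (k + 1)) := by
  simp only [eulerSub_eq_infProd, map_infProd, map_sub, map_one, map_pow, map_X]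

theorem pochNeg_mul_eulerSub {j : ℕ} (hj : 0 < j) :
    pochNeg j j * eulerSub j = eulerSub (2 * j) := by
  rw [pochNeg, eulerSub_eq_infProd,
    (convergentFactors_pochNeg hj hj).infProd_mul (convergentFactors_euler hj), eulerSub_eq_infProd]
  congr 1
  funext k
  ring

def triangle (i : ℤ) : ℕ := (i * (i + 1) / 2).toNat

theorem two_mul_triangle (i : ℤ) : 2 * (triangle i : ℤ) = i * (i + 1) := by
  have hnonneg : 0 ≤ i * (i + 1) := by nlinarith [sq_nonneg (2 * i + 1)]
  have heven : i * (i + 1) % 2 = 0 := Int.even_iff.mp (Int.even_mul_succ_self i)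
  unfold triangle
  omega

theorem triangle_natCast (k : ℕ) : triangle k = k * (k + 1) / 2 := by
  have h : 2 * triangle k = k * (k + 1) := by exact_mod_cast two_mul_triangle k
  exact (Nat.div_eq_of_eq_mul_left two_pos (by rw [← h, mul_comm])).symm

theorem triangle_neg_sub_one (i : ℤ) : triangle (-i - 1) = triangle i := by
  zify
  linarith [two_mul_triangle (-i - 1), two_mul_triangle i]

theorem range_triangle : Set.range triangle = Set.range fun k : ℕ => k * (k + 1) / 2 := by
  ext n
  constructor
  · rintro ⟨i, rfl⟩
    rcases le_or_gt 0 i with hi | hi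
    · refine ⟨i.toNat, (triangle_natCast _).symm.trans ?_⟩
      rw [Int.toNat_of_nonneg hi]
    · refine ⟨(-i - 1).toNat, (triangle_natCast _).symm.trans ?_⟩
      rw [Int.toNat_of_nonneg (by omega), triangle_neg_sub_one]
  · rintro ⟨k, rfl⟩
    exact ⟨k, triangle_natCast k⟩

theorem range_triangle_two_mul_sub_one :
    Set.range (fun i => triangle (2 * i - 1)) = Set.range triangle := by
  refine subset_antisymm (Set.range_comp_subset_range (fun i : ℤ => 2 * i - 1) triangle) ?_
  rintro _ ⟨k, rfl⟩
  rcases Int.even_or_odd' k with ⟨m, rfl | rfl⟩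
  · exact ⟨-m, by rw [← triangle_neg_sub_one]; ring_nf⟩
  · exact ⟨m + 1, by ring_nf⟩

theorem psiSub_eq_indicatorSeries (j : ℕ) :
    psiSub j = indicatorSeries (Set.range fun i => j * triangle i) := by
  rw [show (fun i => j * triangle i) = (j * ·) ∘ triangle from rfl, Set.range_comp,
    range_triangle, ← Set.range_comp]
  rfl

def thetaExp (a b : ℕ) (i : ℤ) : ℕ := a * triangle i + b * triangle (-i)

/-- Ramanujan's theta function `f(q^a, q^b) = ∑_{i ∈ ℤ} q^(a i (i + 1) / 2 + b i (i - 1) / 2)`.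
As a `0`/`1` series this is only right when `thetaExp a b` is injective, i.e. for `0 < a ≠ b`. -/
def ramanujanF (a b : ℕ) : ℤ⟦X⟧ := indicatorSeries (Set.range (thetaExp a b))

theorem two_mul_thetaExp (a b : ℕ) (i : ℤ) :
    2 * (thetaExp a b i : ℤ) = a * (i * (i + 1)) + b * (i * (i - 1)) := by
  unfold thetaExp
  push_cast
  linear_combination (a : ℤ) * two_mul_triangle i + (b : ℤ) * two_mul_triangle (-i)

theorem natAbs_le_thetaExp {a b : ℕ} (ha : 0 < a) (hb : 0 < b) (i : ℤ) :
    i.natAbs ≤ thetaExp a b i := by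
  have h := two_mul_thetaExp a b i
  have ha' : (1 : ℤ) ≤ a := by exact_mod_cast ha
  have hb' : (1 : ℤ) ≤ b := by exact_mod_cast hb
  zify
  rcases le_or_gt 0 i with hi | hi
  · rw [abs_of_nonneg hi]
    nlinarith [mul_nonneg (sub_nonneg.mpr ha') (mul_nonneg hi (by omega : (0 : ℤ) ≤ i + 1)),
      mul_nonneg (by omega : (0 : ℤ) ≤ b) (mul_nonneg hi hi)]
  · rw [abs_of_neg hi]
    nlinarith [mul_nonneg (sub_nonneg.mpr hb') (mul_nonneg (by omega : (0 : ℤ) ≤ -i)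
        (by omega : (0 : ℤ) ≤ 1 - i)),
      mul_nonneg (by omega : (0 : ℤ) ≤ a) (mul_nonneg (by omega : (0 : ℤ) ≤ -i)
        (by omega : (0 : ℤ) ≤ -i - 1))]

theorem thetaExp_injective {a b : ℕ} (ha : 0 < a) (hb : 0 < b) (hab : a ≠ b) :
    Function.Injective (thetaExp a b) := by
  intro i i' h
  have h2 : (a + b : ℤ) * (i - i') * (i + i') = (b - a : ℤ) * (i - i') := by
    linear_combination -two_mul_thetaExp a b i + two_mul_thetaExp a b i' +
      2 * congrArg (Nat.cast (R := ℤ)) h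
  by_contra hne
  have hsum : (a + b : ℤ) * (i + i') = b - a :=
    mul_right_cancel₀ (sub_ne_zero.mpr hne) (by linear_combination h2)
  have hab' : (a : ℤ) ≠ b := by exact_mod_cast hab
  rcases lt_trichotomy (i + i') 0 with hs | hs | hs
  · nlinarith
  · rw [hs, mul_zero] at hsum
    exact hab' (by linarith)
  · nlinarith

theorem thetaExp_sub_one_add (a b : ℕ) (i : ℤ) :
    (thetaExp a b (i - 1) : ℤ) + a = thetaExp a b i + (a + b) * (1 - i) := by
  refine mul_left_cancel₀ (two_ne_zero' ℤ) ?_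
  linear_combination two_mul_thetaExp a b (i - 1) - two_mul_thetaExp a b i

theorem thetaExp_add_one_add (a b : ℕ) (i : ℤ) :
    (thetaExp a b (i + 1) : ℤ) + b = thetaExp a b i + (a + b) * (1 + i) := by
  refine mul_left_cancel₀ (two_ne_zero' ℤ) ?_
  linear_combination two_mul_thetaExp a b (i + 1) - two_mul_thetaExp a b i

theorem ramanujanF_three_mul (j : ℕ) : ramanujanF j (3 * j) = psiSub j := by
  have h : thetaExp j (3 * j) = (j * ·) ∘ fun i => triangle (2 * i - 1) := by
    funext i
    simp only [Function.comp_apply]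
    zify
    refine mul_left_cancel₀ (two_ne_zero' ℤ) ?_
    have h2 := two_mul_thetaExp j (3 * j) i
    push_cast at h2
    linear_combination h2 - (j : ℤ) * two_mul_triangle (2 * i - 1)
  rw [ramanujanF, psiSub_eq_indicatorSeries, h, Set.range_comp, range_triangle_two_mul_sub_one,
    ← Set.range_comp]
  rfl

theorem thetaExp_three_six (i : ℤ) : thetaExp 3 6 i = triangle (3 * i - 1) := by
  zify
  refine mul_left_cancel₀ (two_ne_zero' ℤ) ?_
  linear_combination two_mul_thetaExp 3 6 i - two_mul_triangle (3 * i - 1)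

theorem nine_mul_triangle_add_one (m : ℤ) : 9 * triangle m + 1 = triangle (3 * m + 1) := by
  zify
  refine mul_left_cancel₀ (two_ne_zero' ℤ) ?_
  linear_combination 9 * two_mul_triangle m - two_mul_triangle (3 * m + 1)

/-- Sort `k` in `ψ(q) = ∑ₖ q^(k(k+1)/2)` by its residue mod 3. -/
theorem psiSub_one_eq : psiSub 1 = ramanujanF 3 6 + X * psiSub 9 := by
  have hdisj :
      Disjoint (Set.range (thetaExp 3 6)) ((· + 1) '' Set.range fun i => 9 * triangle i) := by
    refine Set.disjoint_left.mpr ?_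
    rintro _ ⟨i, rfl⟩ ⟨_, ⟨m, rfl⟩, h⟩
    simp only [thetaExp] at h
    omega
  rw [psiSub_eq_indicatorSeries, psiSub_eq_indicatorSeries, ramanujanF, ← pow_one X,
    X_pow_mul_indicatorSeries, ← indicatorSeries_union hdisj]
  congr 1
  ext n
  simp only [one_mul, Set.mem_union, Set.mem_range, Set.mem_image]
  constructor
  · rintro ⟨k, rfl⟩
    obtain ⟨m, rfl | rfl | rfl⟩ : ∃ m, k = 3 * m ∨ k = 3 * m + 1 ∨ k = 3 * m + 2 :=
      ⟨k / 3, by omega⟩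
    · exact .inl ⟨-m, by rw [thetaExp_three_six, ← triangle_neg_sub_one]; ring_nf⟩
    · exact .inr ⟨_, ⟨m, rfl⟩, nine_mul_triangle_add_one m⟩
    · exact .inl ⟨m + 1, by rw [thetaExp_three_six]; ring_nf⟩
  · rintro (⟨i, rfl⟩ | ⟨_, ⟨m, rfl⟩, rfl⟩)
    · exact ⟨3 * i - 1, (thetaExp_three_six i).symm⟩
    · exact ⟨3 * m + 1, (nine_mul_triangle_add_one m).symm⟩

theorem finite_jacobi_triple_product {R : Type*} [CommRing R] {a b : ℕ} (hab : 0 < a + b)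
    (N : ℕ) :
    ∏ k ∈ range N, ((1 + X ^ (a + (a + b) * k)) * (1 + X ^ (b + (a + b) * k)) : R⟦X⟧) =
      ∑ i ∈ Icc (-N : ℤ) N, gaussBinom (a + b) (2 * N) (N + i) * X ^ thetaExp a b i := by
  induction N with
  | zero => simp [thetaExp, triangle, gaussBinom]
  | succ N ih =>
    set g : ℤ → R⟦X⟧ := fun i => gaussBinom (a + b) (2 * N) (N + i) * X ^ thetaExp a b i
    have hsupp (s : Finset ℤ) (hs : Icc (-N : ℤ) N ⊆ s) :
        ∑ i ∈ s, g i = ∑ i ∈ Icc (-N : ℤ) N, g i := by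
      refine (sum_subset hs fun i _ hi => ?_).symm
      rw [mem_Icc, not_and_or, not_le, not_le] at hi
      rcases hi with hi | hi
      · simp [g, gaussBinom_of_neg _ (show (N : ℤ) + i < 0 by omega)]
      · simp [g, gaussBinom_of_lt _ (show ((2 * N : ℕ) : ℤ) < N + i by push_cast; omega)]
    have hshift (c : ℤ) : ∑ i ∈ Icc (-(N + 1 : ℕ) : ℤ) (N + 1 : ℕ), g (i + c) =
        ∑ i ∈ Icc (-(N + 1 : ℕ) + c) ((N + 1 : ℕ) + c), g i := by
      rw [← map_add_right_Icc, sum_map]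
      rfl
    have hterm : ∀ i ∈ Icc (-(N + 1 : ℕ) : ℤ) (N + 1 : ℕ),
        gaussBinom (a + b) (2 * (N + 1)) ((N + 1 : ℕ) + i) * X ^ thetaExp a b i =
          g i * (1 + X ^ ((a + b) * (2 * N + 1))) + g (i + -1) * X ^ (a + (a + b) * N) +
            g (i + 1) * X ^ (b + (a + b) * N) := by
      intro i hi
      rw [mem_Icc] at hi
      have e1 : (a + b) * ((2 * N : ℕ) + 1 - (N + i) : ℤ).toNat + thetaExp a b i =
          thetaExp a b (i + -1) + (a + (a + b) * N) := by
        zify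
        rw [Int.toNat_of_nonneg (by omega), ← sub_eq_add_neg]
        linear_combination -thetaExp_sub_one_add a b i
      have e2 : (a + b) * ((N : ℤ) + i + 1).toNat + thetaExp a b i =
          thetaExp a b (i + 1) + (b + (a + b) * N) := by
        zify
        rw [Int.toNat_of_nonneg (by omega)]
        linear_combination -thetaExp_add_one_add a b i
      have hP1 : (X ^ ((a + b) * ((2 * N : ℕ) + 1 - (N + i) : ℤ).toNat) * X ^ thetaExp a b i :
          R⟦X⟧) = X ^ thetaExp a b (i + -1) * X ^ (a + (a + b) * N) := by
        rw [← pow_add, ← pow_add, e1]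
      have hP2 : (X ^ ((a + b) * ((N : ℤ) + i + 1).toNat) * X ^ thetaExp a b i : R⟦X⟧) =
          X ^ thetaExp a b (i + 1) * X ^ (b + (a + b) * N) := by
        rw [← pow_add, ← pow_add, e2]
      rw [show ((N + 1 : ℕ) : ℤ) + i = (N + i) + 1 by push_cast; ring,
        show 2 * (N + 1) = 2 * N + 2 by ring, gaussBinom_add_two hab]
      simp only [g, show (N : ℤ) + (i + -1) = N + i - 1 by ring, ← add_assoc]
      linear_combination gaussBinom (R := R) (a + b) (2 * N) (N + i - 1) * hP1 +
        gaussBinom (R := R) (a + b) (2 * N) (N + i + 1) * hP2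
    have h1 := hsupp (Icc (-(N + 1 : ℕ)) (N + 1 : ℕ)) (Icc_subset_Icc (by omega) (by omega))
    have h2 := hsupp (Icc (-(N + 1 : ℕ) + -1) ((N + 1 : ℕ) + -1))
      (Icc_subset_Icc (by omega) (by omega))
    have h3 := hsupp (Icc (-(N + 1 : ℕ) + 1) ((N + 1 : ℕ) + 1))
      (Icc_subset_Icc (by omega) (by omega))
    rw [prod_range_succ, ih, sum_congr rfl hterm, sum_add_distrib, sum_add_distrib, ← sum_mul,
      ← sum_mul, ← sum_mul, hshift, hshift, h1, h2, h3]
    have hX : (X ^ (a + (a + b) * N) * X ^ (b + (a + b) * N) : R⟦X⟧) =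
        X ^ ((a + b) * (2 * N + 1)) := by
      rw [← pow_add]; ring_nf
    linear_combination (∑ i ∈ Icc (-N : ℤ) N, g i) * hX

theorem modX_ramanujanF {a b : ℕ} (ha : 0 < a) (hb : 0 < b) (hab : a ≠ b) {n N : ℕ}
    (hn : n ≤ N) :
    modX n (ramanujanF a b) = modX n (∑ i ∈ Icc (-N : ℤ) N, X ^ thetaExp a b i) := by
  classical
  rw [modX_eq_modX_iff, X_pow_dvd_iff]
  intro m hm
  simp only [map_sub, map_sum, coeff_X_pow, ramanujanF, indicatorSeries, coeff_mk,
    Set.mem_range]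
  by_cases hex : ∃ i, thetaExp a b i = m
  · obtain ⟨i₀, rfl⟩ := hex
    have hi₀ : i₀ ∈ Icc (-N : ℤ) N := by
      have := natAbs_le_thetaExp ha hb i₀
      rw [mem_Icc]
      omega
    rw [if_pos ⟨i₀, rfl⟩, sum_eq_single_of_mem i₀ hi₀ fun i _ hi =>
      if_neg fun h => hi (thetaExp_injective ha hb hab h).symm, if_pos rfl, sub_self]
  · rw [if_neg hex, sum_eq_zero fun i _ => if_neg fun h => hex ⟨i, h.symm⟩, sub_self]

theorem jacobi_triple_product {a b : ℕ} (ha : 0 < a) (hb : 0 < b) (hab : a ≠ b) :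
    pochNeg a (a + b) * pochNeg b (a + b) * eulerSub (a + b) = ramanujanF a b := by
  have hu : 0 < a + b := by omega
  refine eq_of_forall_modX_eq fun n => ?_
  rw [map_mul, map_mul, pochNeg, pochNeg,
    (convergentFactors_pochNeg ha hu).modX_infProd (m := 2 * n) (by omega),
    (convergentFactors_pochNeg hb hu).modX_infProd (m := 2 * n) (by omega), eulerSub_eq_infProd,
    (convergentFactors_euler hu).modX_infProd (m := 2 * n) (by omega), ← map_mul, ← map_mul,
    ← prod_mul_distrib, finite_jacobi_triple_product hu, sum_mul, map_sum,
    modX_ramanujanF ha hb hab (N := 2 * n) (by omega), map_sum]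
  refine sum_congr rfl fun i _ => ?_
  rcases le_or_gt (i.natAbs + n) (2 * n) with hi | hi
  · rw [mul_right_comm, map_mul, ← eulerPartial, modX_gaussBinom_mul_eulerPartial hu hi, one_mul]
  · have hX : modX n (X ^ thetaExp a b i : ℤ⟦X⟧) = 0 := by
      rw [← map_zero (modX n), modX_eq_modX_iff, sub_zero]
      exact pow_dvd_pow X ((by omega : n ≤ i.natAbs).trans (natAbs_le_thetaExp ha hb i))
    rw [map_mul, map_mul, hX, mul_zero, zero_mul]

theorem psiSub_mul_eulerSub {j : ℕ} (hj : 0 < j) :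
    psiSub j * eulerSub j = eulerSub (2 * j) ^ 2 := by
  have hjtp := jacobi_triple_product hj (by omega : 0 < 3 * j) (by omega)
  rw [ramanujanF_three_mul, show j + 3 * j = 2 * (2 * j) by ring, show 3 * j = j + 2 * j by ring,
    pochNeg_mul_pochNeg hj (by omega)] at hjtp
  have h2 := pochNeg_mul_pochNeg (R := ℤ) hj hj
  rw [← two_mul] at h2
  rw [← hjtp, ← pochNeg_mul_eulerSub (show 0 < 2 * j by omega), ← pochNeg_mul_eulerSub hj, ← h2]
  ring

theorem ramanujanF_three_six_mul :
    ramanujanF 3 6 * (eulerSub 3 * eulerSub 18) = eulerSub 6 * eulerSub 9 ^ 2 := by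
  have hjtp := jacobi_triple_product (a := 3) (b := 6) (by norm_num) (by norm_num) (by norm_num)
  have h3 := pochNeg_mul_pochNeg_mul_pochNeg (R := ℤ) (c := 3) (m := 3) (by norm_num) (by norm_num)
  have h6 := pochNeg_mul_eulerSub (j := 3) (by norm_num)
  have h18 := pochNeg_mul_eulerSub (j := 9) (by norm_num)
  norm_num at hjtp h3 h6 h18
  rw [← hjtp, ← h6, ← h18, ← h3]
  ring

section CubeRootOfUnity

variable {A : Type*} [CommRing A] {ζ : A}

theorem one_sub_pow_mul_one_sub_mul_pow_of_not_dvd (hζ : ζ ^ 2 + ζ + 1 = 0) (x : A) {t : ℕ}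
    (ht : ¬ 3 ∣ t) :
    (1 - x ^ t) * (1 - (ζ * x) ^ t) * (1 - (ζ ^ 2 * x) ^ t) = 1 - x ^ (3 * t) := by
  have h3 : ζ ^ 3 = 1 := by linear_combination (ζ - 1) * hζ
  rw [mul_pow, mul_pow, pow_mul']
  obtain ⟨q, rfl | rfl⟩ : ∃ q, t = 3 * q + 1 ∨ t = 3 * q + 2 := ⟨t / 3, by omega⟩
  · rw [← pow_mul, show 2 * (3 * q + 1) = 3 * (2 * q) + 2 by ring]
    simp only [pow_add, pow_mul, h3, one_pow, one_mul, pow_one]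
    linear_combination (-x ^ (3 * q + 1) + ζ * (x ^ (3 * q + 1)) ^ 2 -
      (ζ - 1) * (x ^ (3 * q + 1)) ^ 3) * hζ
  · rw [← pow_mul, show 2 * (3 * q + 2) = 3 * (2 * q + 1) + 1 by ring]
    simp only [pow_add, pow_mul, h3, one_pow, one_mul, pow_one]
    linear_combination (-x ^ (3 * q + 2) + ζ * (x ^ (3 * q + 2)) ^ 2 -
      (ζ - 1) * (x ^ (3 * q + 2)) ^ 3) * hζ

theorem one_sub_pow_mul_one_sub_mul_pow_of_dvd (hζ : ζ ^ 2 + ζ + 1 = 0) (x : A) {t : ℕ}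
    (ht : 3 ∣ t) :
    (1 - x ^ t) * (1 - (ζ * x) ^ t) * (1 - (ζ ^ 2 * x) ^ t) = (1 - x ^ t) ^ 3 := by
  have h3 : ζ ^ 3 = 1 := by linear_combination (ζ - 1) * hζ
  obtain ⟨q, rfl⟩ := ht
  simp only [mul_pow, ← pow_mul, pow_mul ζ 3, mul_left_comm 2 3, h3, one_pow, one_mul]
  ring

theorem add_mul_add_mul_add_eq_pow_three_add_pow_three (hζ : ζ ^ 2 + ζ + 1 = 0) (a y : A) :
    (a + y) * (a + ζ * y) * (a + ζ ^ 2 * y) = a ^ 3 + y ^ 3 := by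
  linear_combination (a ^ 2 * y + ζ * a * y ^ 2 + (ζ - 1) * y ^ 3) * hζ

end CubeRootOfUnity

section Twists

variable {S : Type*} [CommRing S] {ω : S}

theorem C_sq_add_C_add_one (hω : ω ^ 2 + ω + 1 = 0) : (C ω : S⟦X⟧) ^ 2 + C ω + 1 = 0 := by
  rw [← map_pow, ← map_add, ← map_one C, ← map_add, hω, map_zero]

/-- `f(q^3, q^6)` and `ψ(q^9)` are series in `q^3`, so `ψ(ωᵏq) = f(q^3, q^6) + ωᵏ q ψ(q^9)`. -/
theorem psiSub_one_mul_rescale_mul_rescale (hω : ω ^ 2 + ω + 1 = 0) :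
    map (Int.castRingHom S) (psiSub 1) * rescale ω (map (Int.castRingHom S) (psiSub 1)) *
        rescale (ω ^ 2) (map (Int.castRingHom S) (psiSub 1)) =
      map (Int.castRingHom S) (ramanujanF 3 6 ^ 3 + X ^ 3 * psiSub 9 ^ 3) := by
  have h3 : ω ^ 3 = 1 := by linear_combination (ω - 1) * hω
  have hω2 : (ω ^ 2) ^ 3 = 1 := by rw [← pow_mul, mul_comm, pow_mul, h3, one_pow]
  have hθ {a : S} (ha : a ^ 3 = 1) : rescale a (map (Int.castRingHom S) (ramanujanF 3 6)) =
      map (Int.castRingHom S) (ramanujanF 3 6) := by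
    rw [ramanujanF, map_indicatorSeries]
    refine rescale_indicatorSeries_of_pow_eq_one ha ?_
    rintro _ ⟨i, rfl⟩
    exact ⟨triangle i + 2 * triangle (-i), by simp only [thetaExp]; ring⟩
  have hψ {a : S} (ha : a ^ 3 = 1) :
      rescale a (map (Int.castRingHom S) (psiSub 9)) = map (Int.castRingHom S) (psiSub 9) := by
    rw [psiSub_eq_indicatorSeries, map_indicatorSeries]
    refine rescale_indicatorSeries_of_pow_eq_one ha ?_
    rintro _ ⟨i, rfl⟩
    exact ⟨3 * triangle i, by ring⟩
  have key := add_mul_add_mul_add_eq_pow_three_add_pow_three (C_sq_add_C_add_one hω)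
    (map (Int.castRingHom S) (ramanujanF 3 6)) (X * map (Int.castRingHom S) (psiSub 9))
  simp only [psiSub_one_eq, map_add, map_mul, map_pow, map_X, rescale_X, hθ h3, hψ h3, hθ hω2,
    hψ hω2]
  linear_combination key

theorem prod_range_one_sub_X_pow_twists (hω : ω ^ 2 + ω + 1 = 0) {j : ℕ} (hj : ¬ 3 ∣ j)
    (n : ℕ) :
    (∏ k ∈ range (3 * n), ((1 - X ^ (j * (k + 1))) * rescale ω (1 - X ^ (j * (k + 1))) *
        rescale (ω ^ 2) (1 - X ^ (j * (k + 1))) : S⟦X⟧)) *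
      ∏ k ∈ range n, (1 - X ^ (9 * j * (k + 1)) : S⟦X⟧) =
    (∏ k ∈ range n, (1 - X ^ (3 * j * (k + 1)) : S⟦X⟧)) ^ 3 *
      ∏ k ∈ range (3 * n), (1 - X ^ (3 * j * (k + 1)) : S⟦X⟧) := by
  have hζ := C_sq_add_C_add_one hω
  have hfactor (t : ℕ) :
      ((1 - X ^ t) * rescale ω (1 - X ^ t) * rescale (ω ^ 2) (1 - X ^ t) : S⟦X⟧) =
        (1 - X ^ t) * (1 - (C ω * X) ^ t) * (1 - ((C ω) ^ 2 * X) ^ t) := by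
    simp only [map_sub, map_one, map_pow, rescale_X]
  have hndvd (i r : ℕ) (hr : r < 2) : ¬ 3 ∣ j * (3 * i + r + 1) := fun h =>
    ((Nat.Prime.dvd_mul Nat.prime_three).mp h).elim hj (by omega)
  rw [mul_comm 3 n, prod_range_mul_eq_prod_prod_range, prod_range_mul_eq_prod_prod_range,
    ← prod_pow, ← prod_mul_distrib, ← prod_mul_distrib]
  refine prod_congr rfl fun i _ => ?_
  simp only [prod_range_succ, prod_range_zero, one_mul, hfactor]
  rw [one_sub_pow_mul_one_sub_mul_pow_of_not_dvd hζ X (hndvd i 0 (by omega)),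
    one_sub_pow_mul_one_sub_mul_pow_of_not_dvd hζ X (hndvd i 1 (by omega)),
    one_sub_pow_mul_one_sub_mul_pow_of_dvd hζ X ⟨j * (i + 1), by ring⟩]
  ring_nf

theorem eulerSub_mul_rescale_mul_rescale (hω : ω ^ 2 + ω + 1 = 0) {j : ℕ} (hj : 0 < j)
    (hj3 : ¬ 3 ∣ j) :
    map (Int.castRingHom S) (eulerSub j) * rescale ω (map (Int.castRingHom S) (eulerSub j)) *
        rescale (ω ^ 2) (map (Int.castRingHom S) (eulerSub j)) *
        map (Int.castRingHom S) (eulerSub (9 * j)) =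
      map (Int.castRingHom S) (eulerSub (3 * j)) ^ 4 := by
  have hg := convergentFactors_euler (R := S) hj
  have hg3 := convergentFactors_euler (R := S) (show 0 < 3 * j by omega)
  have hg9 := convergentFactors_euler (R := S) (show 0 < 9 * j by omega)
  simp only [map_eulerSub, rescale_infProd]
  refine eq_of_forall_modX_eq fun n => ?_
  rw [map_mul, map_mul, map_mul, hg.modX_infProd (m := 3 * n) (by omega),
    (hg.rescale ω).modX_infProd (m := 3 * n) (by omega),
    (hg.rescale (ω ^ 2)).modX_infProd (m := 3 * n) (by omega), hg9.modX_infProd le_rfl,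
    ← map_mul, ← map_mul, ← map_mul, ← prod_mul_distrib, ← prod_mul_distrib,
    prod_range_one_sub_X_pow_twists hω hj3, pow_succ, map_mul, map_mul, map_pow, map_pow,
    hg3.modX_infProd le_rfl, hg3.modX_prod_range (m := 3 * n) (m' := n) (by omega) le_rfl]
  ring

end Twists

theorem ramanujanF_cube_add_mul_eulerSub :
    (ramanujanF 3 6 ^ 3 + X ^ 3 * psiSub 9 ^ 3) * eulerSub 3 ^ 4 * eulerSub 18 ^ 2 =
      eulerSub 6 ^ 8 * eulerSub 9 := by
  obtain ⟨ω, hω⟩ : ∃ ω : ℂ, ω ^ 2 + ω + 1 = 0 := by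
    have h := (Complex.isPrimitiveRoot_exp 3 (by norm_num)).geom_sum_eq_zero (by norm_num)
    simp only [sum_range_succ, sum_range_zero, pow_zero, pow_one, zero_add] at h
    exact ⟨_, by linear_combination h⟩
  apply map_injective (Int.castRingHom ℂ) Int.cast_injective
  have hψ := psiSub_one_mul_rescale_mul_rescale hω
  have hE1 := eulerSub_mul_rescale_mul_rescale hω (j := 1) one_pos (by norm_num)
  have hE2 := eulerSub_mul_rescale_mul_rescale hω (j := 2) two_pos (by norm_num)
  have hG := congrArg (map (Int.castRingHom ℂ)) (psiSub_mul_eulerSub one_pos)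
  rw [map_mul, map_pow] at hG
  have hGω := congrArg (rescale ω) hG
  have hGω2 := congrArg (rescale (ω ^ 2)) hG
  rw [map_mul, map_pow] at hGω hGω2
  norm_num at hE1 hE2 hG hGω hGω2
  rw [map_mul, map_mul, map_mul, map_pow, map_pow, map_pow, ← hψ, ← hE1,
    show (8 : ℕ) = 4 * 2 by rfl, pow_mul, ← hE2]
  set P := map (Int.castRingHom ℂ) (psiSub 1)
  set E₁ := map (Int.castRingHom ℂ) (eulerSub 1)
  set E₂ := map (Int.castRingHom ℂ) (eulerSub 2)
  set rest := map (Int.castRingHom ℂ) (eulerSub 9) * map (Int.castRingHom ℂ) (eulerSub 18) ^ 2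
  linear_combination
    (rescale ω P * rescale ω E₁ * rescale (ω ^ 2) P * rescale (ω ^ 2) E₁ * rest) * hG +
    (E₂ ^ 2 * rescale (ω ^ 2) P * rescale (ω ^ 2) E₁ * rest) * hGω +
    (E₂ ^ 2 * rescale ω E₂ ^ 2 * rest) * hGω2

theorem ramanujanF_cube_add_mul_psiSub :
    (ramanujanF 3 6 ^ 3 + X ^ 3 * psiSub 9 ^ 3) * psiSub 9 = psiSub 3 ^ 4 := by
  have hunit : IsUnit (eulerSub 3 ^ 4 * eulerSub 18 ^ 2) := by
    rw [isUnit_iff_constantCoeff, map_mul, map_pow, map_pow,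
      constantCoeff_eulerSub_s3 (by norm_num), constantCoeff_eulerSub_s3 (by norm_num)]
    simp
  have h3 := psiSub_mul_eulerSub (j := 3) (by norm_num)
  have h9 := psiSub_mul_eulerSub (j := 9) (by norm_num)
  norm_num at h3 h9
  refine hunit.mul_left_injective ?_
  linear_combination psiSub 9 * ramanujanF_cube_add_mul_eulerSub + eulerSub 6 ^ 8 * h9 -
    eulerSub 18 ^ 2 * (psiSub 3 ^ 3 * eulerSub 3 ^ 3 +
      psiSub 3 ^ 2 * eulerSub 3 ^ 2 * eulerSub 6 ^ 2 + psiSub 3 * eulerSub 3 * eulerSub 6 ^ 4 +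
      eulerSub 6 ^ 6) * h3

theorem ASub_three : ASub 3 = ramanujanF 3 6 := by
  have h : constantCoeff (eulerSub 3 * eulerSub 18) = ↑(1 : ℤˣ) := by
    rw [map_mul, constantCoeff_eulerSub_s3 (by norm_num), constantCoeff_eulerSub_s3 (by norm_num)]
    rfl
  show eulerSub 6 * eulerSub 9 ^ 2 * invOfUnit (eulerSub 3 * eulerSub 18) 1 = _
  rw [← ramanujanF_three_six_mul, mul_assoc, mul_invOfUnit _ _ h, mul_one]

theorem constantCoeff_psiSub (j : ℕ) : constantCoeff (psiSub j) = 1 := by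
  rw [← coeff_zero_eq_constantCoeff_apply, psiSub, coeff_mk, if_pos ⟨0, by simp⟩]

end

theorem A_cube_add_psi_cube :
    ASub 3 ^ 3 + PowerSeries.X ^ 3 * psiSub 9 ^ 3 =
      psiSub 3 ^ 4 * PowerSeries.invOfUnit (psiSub 9) 1 := by
  rw [ASub_three, ← ramanujanF_cube_add_mul_psiSub, mul_assoc,
    mul_invOfUnit _ _ (constantCoeff_psiSub 9), mul_one]
end
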